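/- arXiv:0911.2519 — 5 statements merged into one kernel-verified Lean document; each statement's English description precedes it below -/
import Mathlib

section
/- Let n ≥ 2 and N = n(n-1)/2. For every sequence w = (w_1, …, w_{N-1}) of integers in {1,…,n-1}, the number of n-particle sorting networks ω = (s_1,…,s_N) with (s_1,…,s_{N-1}) = w equals the number of n-particle sorting networks ω = (s_1,…,s_N) with (s_2,…,s_N) = w. (Equivalently, under the uniform measure on SN_n the random sequence of swap locations is stationary: (s_1,…,s_{N-1}) and (s_2,…,s_N) are equal in law.) -/
open scoped Classical

/-- The ordered list of adjacent swaps of a word `ω`.  An entry `e : Fin (n-1)` encodes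
the swap location `s = e + 1 ∈ {1, …, n-1}`; the swap `τ_s` exchanges locations `s` and
`s + 1`, i.e. it is `Equiv.swap (e+1) (e+2)`. -/
def swapList (n : ℕ) {N : ℕ} (ω : Fin N → Fin (n - 1)) : List (Equiv.Perm ℕ) :=
  List.ofFn (fun t => Equiv.swap ((ω t : ℕ) + 1) ((ω t : ℕ) + 2))

/-- The configuration `σ_t = τ_{s_1} ⋯ τ_{s_t}` of the word `ω` at time `t`. -/
def config (n : ℕ) {N : ℕ} (ω : Fin N → Fin (n - 1)) (t : ℕ) : Equiv.Perm ℕ :=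
  ((swapList n ω).take t).prod

/-- `SN n` is the set of `n`-particle sorting networks: words `ω` of length
`N = n(n-1)/2` in the letters `{1, …, n-1}` (encoded by `Fin (n-1)` via `e ↦ e+1`)
such that `τ_{s_1} ⋯ τ_{s_N}` is the reverse permutation `i ↦ n+1-i` on `{1, …, n}`. -/
noncomputable def SN (n : ℕ) : Finset (Fin (n * (n - 1) / 2) → Fin (n - 1)) :=
  Finset.univ.filter
    (fun ω => ∀ i ∈ Finset.Icc 1 n, config n ω (n * (n - 1) / 2) i = n + 1 - i)

/-! ### Auxiliary material -/

/-- The reversal function on `{1,…,n} ⊆ ℕ`. -/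
def revFun (n : ℕ) (i : ℕ) : ℕ := if 1 ≤ i ∧ i ≤ n then n + 1 - i else i

lemma revFun_invol (n : ℕ) : ∀ i, revFun n (revFun n i) = i := by
  intro i
  unfold revFun
  split_ifs <;> omega

/-- The reversal permutation of `{1,…,n}` as a permutation of `ℕ`. -/
def rev (n : ℕ) : Equiv.Perm ℕ :=
  ⟨revFun n, revFun n, revFun_invol n, revFun_invol n⟩

lemma rev_apply (n i : ℕ) : rev n i = if 1 ≤ i ∧ i ≤ n then n + 1 - i else i := rfl

lemma rev_mul_self (n : ℕ) : rev n * rev n = 1 :=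
  Equiv.ext fun i => revFun_invol n i

lemma rev_inv (n : ℕ) : (rev n)⁻¹ = rev n :=
  inv_eq_of_mul_eq_one_right (rev_mul_self n)

lemma list_prod_fix {l : List (Equiv.Perm ℕ)} {i : ℕ} (h : ∀ p ∈ l, p i = i) :
    l.prod i = i := by
  induction l with
  | nil => rfl
  | cons a t ih =>
      have ha := h a List.mem_cons_self
      have ht : ∀ p ∈ t, p i = i := fun p hp => h p (List.mem_cons_of_mem a hp)
      rw [List.prod_cons, Equiv.Perm.mul_apply, ih ht, ha]

lemma swapList_prod_fix {n N : ℕ} (ω : Fin N → Fin (n - 1)) {i : ℕ}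
    (hi : i = 0 ∨ n < i) : (swapList n ω).prod i = i := by
  apply list_prod_fix
  intro p hp
  rw [swapList, List.mem_ofFn] at hp
  obtain ⟨t, ht⟩ := hp
  have h2 : (ω t : ℕ) < n - 1 := (ω t).isLt
  rw [← ht]
  exact Equiv.swap_apply_of_ne_of_ne (by omega) (by omega)

lemma mem_SN_iff {n : ℕ} (ω : Fin (n * (n - 1) / 2) → Fin (n - 1)) :
    ω ∈ SN n ↔ (swapList n ω).prod = rev n := by
  have hlen : (swapList n ω).length = n * (n - 1) / 2 := List.length_ofFn
  have hcfg : config n ω (n * (n - 1) / 2) = (swapList n ω).prod := by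
    rw [config, List.take_of_length_le (le_of_eq hlen)]
  simp only [SN, Finset.mem_filter, Finset.mem_univ, true_and]
  constructor
  · intro h
    ext i
    rw [rev_apply]
    split_ifs with h1
    · have := h i (Finset.mem_Icc.mpr ⟨h1.1, h1.2⟩)
      rwa [hcfg] at this
    · exact swapList_prod_fix ω (by omega)
  · intro h
    intro i hi
    obtain ⟨hi1, hi2⟩ := Finset.mem_Icc.mp hi
    rw [hcfg, h, rev_apply, if_pos ⟨hi1, hi2⟩]

lemma ofFn_cast {α : Type*} {M N : ℕ} (h : N = M) (f : Fin N → α) :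
    List.ofFn f = List.ofFn (fun i : Fin M => f (Fin.cast h.symm i)) := by
  subst h; rfl

lemma prod_last {n N : ℕ} (hN : 1 ≤ N) (ω : Fin N → Fin (n - 1)) :
    (swapList n ω).prod =
      (swapList n (fun i : Fin (N - 1) => ω ⟨i.val, by have := i.isLt; omega⟩)).prod *
        Equiv.swap ((ω ⟨N - 1, by omega⟩ : ℕ) + 1) ((ω ⟨N - 1, by omega⟩ : ℕ) + 2) := by
  rw [swapList, ofFn_cast (show N = (N - 1) + 1 by omega), List.ofFn_succ',
    List.concat_eq_append, List.prod_append, List.prod_singleton]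
  rfl

lemma prod_first {n N : ℕ} (hN : 1 ≤ N) (ω : Fin N → Fin (n - 1)) :
    (swapList n ω).prod =
      Equiv.swap ((ω ⟨0, by omega⟩ : ℕ) + 1) ((ω ⟨0, by omega⟩ : ℕ) + 2) *
        (swapList n (fun i : Fin (N - 1) => ω ⟨i.val + 1, by have := i.isLt; omega⟩)).prod := by
  rw [swapList, ofFn_cast (show N = (N - 1) + 1 by omega), List.ofFn_succ, List.prod_cons]
  rfl

lemma conj_step (n : ℕ) (σ : Equiv.Perm ℕ) (a b : ℕ) (ha : 1 ≤ a ∧ a ≤ n)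
    (hb : 1 ≤ b ∧ b ≤ n) :
    σ * Equiv.swap a b = rev n ↔ Equiv.swap (n + 1 - a) (n + 1 - b) * σ = rev n := by
  have hra : rev n a = n + 1 - a := by rw [rev_apply, if_pos ha]
  have hrb : rev n b = n + 1 - b := by rw [rev_apply, if_pos hb]
  have hc : Equiv.swap (n + 1 - a) (n + 1 - b) =
      rev n * Equiv.swap a b * (rev n)⁻¹ := by
    rw [← hra, ← hrb]; exact Equiv.swap_apply_apply (rev n) a b
  constructor
  · intro h
    have hσ : σ = rev n * (Equiv.swap a b)⁻¹ := by
      rw [eq_mul_inv_iff_mul_eq]; exact h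
    rw [hc, hσ]
    group
  · intro h
    rw [hc] at h
    have hσ : σ = (rev n * Equiv.swap a b * (rev n)⁻¹)⁻¹ * rev n := by
      rw [eq_inv_mul_iff_mul_eq]; exact h
    rw [hσ]
    group

/-- The conjugated swap location: `e ↦ n-2-e` (encoding `s ↦ n-s`). -/
def conjIdx (n : ℕ) (e : Fin (n - 1)) : Fin (n - 1) :=
  ⟨n - 2 - e.val, by have := e.isLt; omega⟩

lemma conjIdx_invol (n : ℕ) (e : Fin (n - 1)) : conjIdx n (conjIdx n e) = e := by
  have := e.isLt
  apply Fin.ext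
  simp only [conjIdx]
  omega

/-- Shift a word one step to the right, placing the conjugate of the last letter first. -/
def shiftR (n : ℕ) {N : ℕ} (ω : Fin N → Fin (n - 1)) (j : Fin N) : Fin (n - 1) :=
  if j.val = 0 then conjIdx n (ω ⟨N - 1, by have := j.isLt; omega⟩)
  else ω ⟨j.val - 1, by have := j.isLt; omega⟩

/-- Shift a word one step to the left, placing the conjugate of the first letter last. -/
def shiftL (n : ℕ) {N : ℕ} (ω : Fin N → Fin (n - 1)) (j : Fin N) : Fin (n - 1) :=
  if h : j.val = N - 1 then conjIdx n (ω ⟨0, by have := j.isLt; omega⟩)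
  else ω ⟨j.val + 1, by have := j.isLt; omega⟩

lemma shiftR_zero {n N : ℕ} (ω : Fin N → Fin (n - 1)) (j : Fin N) (hj : j.val = 0) :
    shiftR n ω j = conjIdx n (ω ⟨N - 1, by have := j.isLt; omega⟩) := by
  rw [shiftR, if_pos hj]

lemma shiftR_pos {n N : ℕ} (ω : Fin N → Fin (n - 1)) (j : Fin N) (hj : j.val ≠ 0) :
    shiftR n ω j = ω ⟨j.val - 1, by have := j.isLt; omega⟩ := by
  rw [shiftR, if_neg hj]

lemma shiftL_last {n N : ℕ} (ω : Fin N → Fin (n - 1)) (j : Fin N) (hj : j.val = N - 1) :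
    shiftL n ω j = conjIdx n (ω ⟨0, by have := j.isLt; omega⟩) := by
  rw [shiftL, dif_pos hj]

lemma shiftL_lt {n N : ℕ} (ω : Fin N → Fin (n - 1)) (j : Fin N) (hj : j.val ≠ N - 1) :
    shiftL n ω j = ω ⟨j.val + 1, by have := j.isLt; omega⟩ := by
  rw [shiftL, dif_neg hj]

lemma apply_mk_eq {α : Type*} {N : ℕ} (ω : Fin N → α) {a b : ℕ} (ha : a < N) (hb : b < N)
    (h : a = b) : ω ⟨a, ha⟩ = ω ⟨b, hb⟩ := by subst h; rfl

/-- Stationarity: for every word `w` of length `N - 1`, the number of `n`-particle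
sorting networks whose first `N - 1` swap locations form `w` equals the number of
`n`-particle sorting networks whose last `N - 1` swap locations form `w`. -/
theorem stmt2 (n : ℕ) (hn : 2 ≤ n) (w : Fin (n * (n - 1) / 2 - 1) → Fin (n - 1)) :
    ((SN n).filter (fun ω => ∀ i : Fin (n * (n - 1) / 2 - 1),
      ω ⟨i.val, by have := i.isLt; omega⟩ = w i)).card =
    ((SN n).filter (fun ω => ∀ i : Fin (n * (n - 1) / 2 - 1),
      ω ⟨i.val + 1, by have := i.isLt; omega⟩ = w i)).card := by
  have h2 : 2 ≤ n * (n - 1) := by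
    calc 2 = 2 * 1 := rfl
    _ ≤ n * (n - 1) := Nat.mul_le_mul hn (by omega)
  have hN : 1 ≤ n * (n - 1) / 2 := by omega
  -- characterizations of the two filtered sets
  have memL : ∀ ω, (ω ∈ (SN n).filter (fun ω => ∀ i : Fin ((n * (n - 1) / 2) - 1),
      ω ⟨i.val, by have := i.isLt; omega⟩ = w i)) ↔
      ((∀ i : Fin ((n * (n - 1) / 2) - 1), ω ⟨i.val, by have := i.isLt; omega⟩ = w i) ∧
        (swapList n w).prod *
          Equiv.swap ((ω ⟨(n * (n - 1) / 2) - 1, by omega⟩ : ℕ) + 1) ((ω ⟨(n * (n - 1) / 2) - 1, by omega⟩ : ℕ) + 2)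
          = rev n) := by
    intro ω
    rw [Finset.mem_filter, mem_SN_iff, and_comm]
    constructor
    · rintro ⟨hw, hprod⟩
      refine ⟨hw, ?_⟩
      have : (fun i : Fin ((n * (n - 1) / 2) - 1) => ω ⟨i.val, by have := i.isLt; omega⟩) = w :=
        funext fun i => hw i
      rw [← this, ← prod_last hN ω, hprod]
    · rintro ⟨hw, hprod⟩
      refine ⟨hw, ?_⟩
      have : (fun i : Fin ((n * (n - 1) / 2) - 1) => ω ⟨i.val, by have := i.isLt; omega⟩) = w :=
        funext fun i => hw i
      rw [prod_last hN ω, this, hprod]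
  have memR : ∀ ω, (ω ∈ (SN n).filter (fun ω => ∀ i : Fin ((n * (n - 1) / 2) - 1),
      ω ⟨i.val + 1, by have := i.isLt; omega⟩ = w i)) ↔
      ((∀ i : Fin ((n * (n - 1) / 2) - 1), ω ⟨i.val + 1, by have := i.isLt; omega⟩ = w i) ∧
        Equiv.swap ((ω ⟨0, by omega⟩ : ℕ) + 1) ((ω ⟨0, by omega⟩ : ℕ) + 2) *
          (swapList n w).prod = rev n) := by
    intro ω
    rw [Finset.mem_filter, mem_SN_iff, and_comm]
    constructor
    · rintro ⟨hw, hprod⟩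
      refine ⟨hw, ?_⟩
      have : (fun i : Fin ((n * (n - 1) / 2) - 1) => ω ⟨i.val + 1, by have := i.isLt; omega⟩) = w :=
        funext fun i => hw i
      rw [← this, ← prod_first hN ω, hprod]
    · rintro ⟨hw, hprod⟩
      refine ⟨hw, ?_⟩
      have : (fun i : Fin ((n * (n - 1) / 2) - 1) => ω ⟨i.val + 1, by have := i.isLt; omega⟩) = w :=
        funext fun i => hw i
      rw [prod_first hN ω, this, hprod]
  -- the bijection
  refine Finset.card_bij' (fun ω _ => shiftR n ω) (fun ω _ => shiftL n ω) ?_ ?_ ?_ ?_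
  · -- forward membership
    intro ω hω
    obtain ⟨hw, hprod⟩ := (memL ω).mp hω
    set e : Fin (n - 1) := ω ⟨n * (n - 1) / 2 - 1, by omega⟩ with he
    have helt : (e : ℕ) < n - 1 := e.isLt
    refine (memR _).mpr ⟨?_, ?_⟩
    · intro i
      beta_reduce
      rw [shiftR_pos _ _ (by simp)]
      exact (apply_mk_eq ω _ _ (by simp)).trans (hw i)
    · beta_reduce
      rw [shiftR_zero _ _ rfl, ← he]
      have hc : (conjIdx n e : ℕ) = n - 2 - (e : ℕ) := rfl
      rw [hc]
      have hswap : Equiv.swap (n - 2 - (e : ℕ) + 1) (n - 2 - (e : ℕ) + 2) =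
          Equiv.swap (n + 1 - ((e : ℕ) + 1)) (n + 1 - ((e : ℕ) + 2)) := by
        rw [show n - 2 - (e : ℕ) + 1 = n + 1 - ((e : ℕ) + 2) by omega,
          show n - 2 - (e : ℕ) + 2 = n + 1 - ((e : ℕ) + 1) by omega]
        exact Equiv.swap_comm _ _
      rw [hswap, ← conj_step n _ _ _ (by omega) (by omega)]
      exact hprod
  · -- backward membership
    intro ω hω
    obtain ⟨hw, hprod⟩ := (memR ω).mp hω
    set e : Fin (n - 1) := ω ⟨0, by omega⟩ with he
    have helt : (e : ℕ) < n - 1 := e.isLt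
    refine (memL _).mpr ⟨?_, ?_⟩
    · intro i
      beta_reduce
      rw [shiftL_lt _ _ (by have := i.isLt; simp; omega)]
      exact (apply_mk_eq ω _ _ rfl).trans (hw i)
    · beta_reduce
      rw [shiftL_last _ _ rfl, ← he]
      have hc : (conjIdx n e : ℕ) = n - 2 - (e : ℕ) := rfl
      rw [hc]
      rw [conj_step n _ _ _ (by omega) (by omega)]
      have hswap : Equiv.swap (n + 1 - (n - 2 - (e : ℕ) + 1)) (n + 1 - (n - 2 - (e : ℕ) + 2)) =
          Equiv.swap ((e : ℕ) + 1) ((e : ℕ) + 2) := by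
        rw [show n + 1 - (n - 2 - (e : ℕ) + 1) = (e : ℕ) + 2 by omega,
          show n + 1 - (n - 2 - (e : ℕ) + 2) = (e : ℕ) + 1 by omega]
        exact Equiv.swap_comm _ _
      rw [hswap]
      exact hprod
  · -- left inverse
    intro ω hω
    funext j
    beta_reduce
    by_cases hj : j.val = n * (n - 1) / 2 - 1
    · rw [shiftL_last _ _ hj, shiftR_zero _ _ rfl, conjIdx_invol]
      exact apply_mk_eq ω _ j.isLt hj.symm
    · rw [shiftL_lt _ _ hj, shiftR_pos _ _ (by simp)]
      exact apply_mk_eq ω _ j.isLt (by simp)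
  · -- right inverse
    intro ω hω
    funext j
    beta_reduce
    by_cases hj : j.val = 0
    · rw [shiftR_zero _ _ hj, shiftL_last _ _ rfl, conjIdx_invol]
      exact apply_mk_eq ω _ j.isLt hj.symm
    · rw [shiftR_pos _ _ hj, shiftL_lt _ _ (by have := j.isLt; simp; omega)]
      exact apply_mk_eq ω _ j.isLt (by simp; omega)
end

section
/- Let n ≥ 2 and 1 ≤ k ≤ n-1. The sum of P(ε) over all binary sequences ε ∈ {0,1}^{n-2} containing exactly k-1 ones equals p_n(k); equivalently, C(n-2, k-1) · 2 · (k-1/2)_{k-1} (n-k-1/2)_{n-k-1} / n! = p_n(k). That is, in the Polya urn starting from 3/2 white and 3/2 black balls, after n-2 balls have been added the probability that exactly k-1 of them are white equals p_n(k). -/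
open scoped Classical
open Finset

/-- Falling factorial `(a)_r = a (a-1) ⋯ (a-r+1)`. -/
noncomputable def ffac : ℝ → ℕ → ℝ
  | _, 0 => 1
  | a, r + 1 => a * ffac (a - 1) r

/-- The mass function `p_n(k)`:
`p_n(k) = (1 / C(n,2)) ⬝ (k-1/2)_{k-1} (n-k-1/2)_{n-k-1} / ((k-1)! (n-k-1)!)`. -/
noncomputable def pn (n k : ℕ) : ℝ :=
  (1 / ((n.choose 2 : ℕ) : ℝ)) *
    (ffac ((k : ℝ) - 1/2) (k - 1) * ffac ((n : ℝ) - (k : ℝ) - 1/2) (n - k - 1)) /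
    (((k - 1).factorial : ℝ) * ((n - k - 1).factorial : ℝ))

/-- The probability of the color sequence `ε` (with `true` = white) in the Polya urn
starting from `3/2` white and `3/2` black balls: `P(ε) = ∏_i c_i / (i + 2)` (with `i`
running from `1` to `r`), where `c_i = 3/2 + #{i' < i : ε_{i'} = ε_i}`. -/
noncomputable def urnP {r : ℕ} (ε : Fin r → Bool) : ℝ :=
  ∏ i : Fin r,
    ((3/2 : ℝ) + ((Finset.univ.filter (fun i' : Fin r => i' < i ∧ ε i' = ε i)).card : ℝ))
      / (((i : ℕ) : ℝ) + 3)

noncomputable def g (m : ℕ) : ℝ := ∏ j ∈ Finset.range m, ((3/2 : ℝ) + j)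

lemma ffac_eq_g (m : ℕ) : ffac ((m : ℝ) + 1/2) m = g m := by
  induction m with
  | zero => simp [ffac, g]
  | succ m ih =>
    rw [g, Finset.prod_range_succ, ← g, ← ih]
    rw [show ((m+1 : ℕ) : ℝ) + 1/2 = ((m:ℝ)+3/2) by push_cast; ring]
    rw [show ffac ((m:ℝ)+3/2) (m+1) = ((m:ℝ)+3/2) * ffac ((m:ℝ)+3/2-1) m from rfl]
    rw [show (m:ℝ)+3/2-1 = (m:ℝ)+1/2 by ring]
    ring

lemma card_false (r : ℕ) (ε : Fin r → Bool) :
    (univ.filter (fun i => ε i = false)).card = r - (univ.filter (fun i => ε i = true)).card := by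
  have h := Finset.card_filter_add_card_filter_not (s := (univ : Finset (Fin r)))
      (p := fun i => ε i = true)
  simp only [Finset.card_univ, Fintype.card_fin] at h
  have he : (univ.filter (fun i => ¬ ε i = true)) = (univ.filter (fun i => ε i = false)) := by
    apply Finset.filter_congr; intro i _; simp
  rw [he] at h
  omega

lemma card_filter_lt (r : ℕ) (j : Fin (r+1)) (b : Bool) (ε : Fin (r+1) → Bool) :
    (univ.filter (fun i' : Fin (r+1) => i' < j ∧ ε i' = b)).card
      = (univ.filter (fun i' : Fin r => i'.castSucc < j ∧ ε i'.castSucc = b)).card := by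
  symm
  apply Finset.card_bij (fun (i' : Fin r) _ => i'.castSucc)
  · intro a ha; simp only [Finset.mem_filter, Finset.mem_univ, true_and] at ha ⊢; exact ha
  · intro a _ b _ h; exact Fin.castSucc_injective _ h
  · intro a ha
    simp only [Finset.mem_filter, Finset.mem_univ, true_and] at ha
    have hlt : (a : ℕ) < r := by
      have := ha.1
      have hj : (j : ℕ) ≤ r := Nat.lt_succ_iff.mp j.isLt
      have : (a : ℕ) < (j : ℕ) := this
      omega
    refine ⟨⟨(a : ℕ), hlt⟩, ?_, ?_⟩
    · simp only [Finset.mem_filter, Finset.mem_univ, true_and]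
      have : Fin.castSucc (⟨(a:ℕ), hlt⟩ : Fin r) = a := by ext; simp
      rw [this]; exact ha
    · ext; simp

lemma prod_num (r : ℕ) (ε : Fin r → Bool) :
    (∏ i : Fin r, ((3/2 : ℝ) + ((univ.filter (fun i' : Fin r => i' < i ∧ ε i' = ε i)).card : ℝ)))
      = g ((univ.filter (fun i => ε i = true)).card)
        * g (r - (univ.filter (fun i => ε i = true)).card) := by
  induction r with
  | zero => simp [g]
  | succ r ih =>
    set ε' : Fin r → Bool := fun i => ε i.castSucc with hε'
    have hlast : ∀ i : Fin r,
        (univ.filter (fun i' : Fin (r+1) => i' < i.castSucc ∧ ε i' = ε i.castSucc)).card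
          = (univ.filter (fun i' : Fin r => i' < i ∧ ε' i' = ε' i)).card := by
      intro i
      rw [card_filter_lt r i.castSucc (ε i.castSucc) ε]
      apply Finset.card_nbij (fun i => i)
      · intro a ha; simpa [Fin.castSucc_lt_castSucc_iff, hε'] using ha
      · intro a _ b _ h; exact h
      · intro a ha; exact ⟨a, by simpa [Fin.castSucc_lt_castSucc_iff, hε'] using ha, rfl⟩
    have hlast2 :
        (univ.filter (fun i' : Fin (r+1) => i' < Fin.last r ∧ ε i' = ε (Fin.last r))).card
          = (univ.filter (fun i' : Fin r => ε' i' = ε (Fin.last r))).card := by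
      rw [card_filter_lt r (Fin.last r) (ε (Fin.last r)) ε]
      congr 1
      apply Finset.filter_congr
      intro i' _
      simp [Fin.castSucc_lt_last, hε']
    rw [Fin.prod_univ_castSucc]
    have hT : (univ.filter (fun i : Fin (r+1) => ε i = true)).card
        = (univ.filter (fun i : Fin r => ε' i = true)).card
          + (if ε (Fin.last r) = true then 1 else 0) := by
      rw [show (univ : Finset (Fin (r+1))) = (univ.map Fin.castSuccEmb) ∪ {Fin.last r} by
        ext x
        simp only [Finset.mem_univ, Finset.mem_union, Finset.mem_map, Finset.mem_singleton,
          true_iff]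
        rcases Fin.eq_castSucc_or_eq_last x with ⟨y, hy⟩ | h
        · exact Or.inl ⟨y, trivial, hy.symm⟩
        · exact Or.inr h]
      rw [Finset.filter_union, Finset.card_union_of_disjoint, Finset.filter_map,
        Finset.card_map]
      · congr 1
        simp only [Finset.filter_singleton]
        split <;> simp
      · apply Finset.disjoint_filter_filter
        simp only [Finset.disjoint_left, Finset.mem_map, Finset.mem_singleton]
        rintro x ⟨y, -, rfl⟩ hx
        rw [show Fin.castSuccEmb y = y.castSucc from rfl] at hx
        exact absurd hx (Fin.castSucc_lt_last y).ne
    set T' := (univ.filter (fun i : Fin r => ε' i = true)).card with hT'def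
    have hT'le : T' ≤ r := le_trans (Finset.card_filter_le _ _) (by simp)
    have hmain : (∏ i : Fin r, ((3/2 : ℝ) +
        ((univ.filter (fun i' : Fin (r+1) => i' < i.castSucc ∧ ε i' = ε i.castSucc)).card : ℝ)))
        = g T' * g (r - T') := by
      rw [Finset.prod_congr rfl (fun i _ => by rw [hlast i])]
      exact ih ε'
    rw [hmain, hlast2, hT]
    cases hb : ε (Fin.last r)
    · simp only [hb, Bool.false_eq_true, if_false, Nat.add_zero]
      rw [show (univ.filter (fun i' : Fin r => ε' i' = false)).card = r - T' from card_false r ε']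
      have : g (r + 1 - T') = g (r - T') * ((3/2 : ℝ) + ((r - T' : ℕ) : ℝ)) := by
        rw [show r + 1 - T' = (r - T') + 1 by omega, g, Finset.prod_range_succ, ← g]
      rw [this]
      ring
    · simp only [hb, if_true]
      rw [show g (T' + 1) = g T' * ((3/2 : ℝ) + (T' : ℝ)) by
        rw [g, Finset.prod_range_succ, ← g]]
      rw [show r + 1 - (T' + 1) = r - T' by omega]
      ring

lemma prod_den (r : ℕ) : (∏ i : Fin r, (((i : ℕ) : ℝ) + 3)) * 2 = (((r+2).factorial : ℕ) : ℝ) := by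
  induction r with
  | zero => norm_num [Nat.factorial]
  | succ r ih =>
    rw [Fin.prod_univ_castSucc]
    simp only [Fin.coe_castSucc, Fin.val_last]
    rw [show r + 1 + 2 = (r + 2) + 1 from rfl, Nat.factorial_succ]
    push_cast
    rw [← ih]
    ring

lemma card_eps (r w : ℕ) :
    (univ.filter (fun ε : Fin r → Bool =>
      (univ.filter (fun i => ε i = true)).card = w)).card = r.choose w := by
  have := Finset.card_powersetCard w (univ : Finset (Fin r))
  rw [Finset.card_univ, Fintype.card_fin] at this
  rw [← this]
  apply Finset.card_nbij (fun ε => univ.filter (fun i => ε i = true))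
  · intro ε hε
    simp only [Finset.mem_coe, Finset.mem_filter, Finset.mem_univ, true_and] at hε
    rw [Finset.mem_coe, Finset.mem_powersetCard]
    exact ⟨Finset.subset_univ _, hε⟩
  · intro a _ b _ h
    have h2 : univ.filter (fun i => a i = true) = univ.filter (fun i => b i = true) := h
    funext i
    have : i ∈ univ.filter (fun i => a i = true) ↔ i ∈ univ.filter (fun i => b i = true) := by
      rw [h2]
    simp only [Finset.mem_filter, Finset.mem_univ, true_and] at this
    cases ha : a i <;> cases hb : b i <;> simp [ha, hb] at this ⊢
  · intro s hs
    rw [Finset.mem_coe, Finset.mem_powersetCard] at hs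
    refine ⟨fun i => decide (i ∈ s), ?_, ?_⟩
    · rw [Finset.mem_coe, Finset.mem_filter]
      refine ⟨Finset.mem_univ _, ?_⟩
      rw [← hs.2]
      congr 1
      ext i
      simp
    · ext i
      simp

lemma key (r w : ℕ) (hw : w ≤ r) :
    ((r.choose w : ℕ) : ℝ) * (2 * g w * g (r - w) / (((r+2).factorial : ℕ) : ℝ))
      = (1 / (((r+2).choose 2 : ℕ) : ℝ)) * (g w * g (r - w)) /
          ((w.factorial : ℝ) * ((r-w).factorial : ℝ)) := by
  have cw : ((r.choose w : ℕ) : ℝ) * (w.factorial : ℝ) * ((r-w).factorial : ℝ)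
      = (r.factorial : ℝ) := by
    exact_mod_cast congrArg (Nat.cast : ℕ → ℝ)
      (Nat.choose_mul_factorial_mul_factorial hw)
  have fF : (((r+2).factorial : ℕ) : ℝ) = ((r:ℝ)+2) * ((r:ℝ)+1) * (r.factorial : ℝ) := by
    rw [show r + 2 = (r + 1) + 1 from rfl, Nat.factorial_succ, Nat.factorial_succ]
    push_cast
    ring
  have cC : (((r+2).choose 2 : ℕ) : ℝ) * 2 = ((r:ℝ)+2) * ((r:ℝ)+1) := by
    have h2 : (r+2).choose 2 * 2 = (r+2)*(r+1) := by
      rw [Nat.choose_two_right]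
      have : 2 ∣ (r+2)*(r+1) := by
        simpa [mul_comm] using (Nat.even_mul_succ_self (r+1)).two_dvd
      rw [show (r+2) - 1 = r + 1 from rfl, Nat.div_mul_cancel this]
    exact_mod_cast congrArg (Nat.cast : ℕ → ℝ) h2
  have hC : (((r+2).choose 2 : ℕ) : ℝ) ≠ 0 := by
    intro h; rw [h] at cC; nlinarith [Nat.cast_nonneg (α := ℝ) r]
  have hW : (w.factorial : ℝ) ≠ 0 := Nat.cast_ne_zero.mpr (Nat.factorial_ne_zero w)
  have hV : ((r-w).factorial : ℝ) ≠ 0 := Nat.cast_ne_zero.mpr (Nat.factorial_ne_zero _)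
  have hR : (r.factorial : ℝ) ≠ 0 := Nat.cast_ne_zero.mpr (Nat.factorial_ne_zero r)
  rw [fF]
  have hrr : ((r:ℝ)+2) * ((r:ℝ)+1) ≠ 0 := by positivity
  field_simp
  linear_combination (2 * (((r+2).choose 2 : ℕ) : ℝ) * g w * g (r-w)) * cw
    + (g w * g (r-w) * (r.factorial : ℝ)) * cC

lemma urnP_eq (r : ℕ) (ε : Fin r → Bool) :
    urnP ε = g ((univ.filter (fun i => ε i = true)).card)
      * g (r - (univ.filter (fun i => ε i = true)).card) * 2 / (((r+2).factorial : ℕ) : ℝ) := by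
  have hF : (((r+2).factorial : ℕ) : ℝ) ≠ 0 := Nat.cast_ne_zero.mpr (Nat.factorial_ne_zero _)
  rw [urnP, Finset.prod_div_distrib, prod_num]
  rw [show (∏ i : Fin r, (((i : ℕ) : ℝ) + 3)) = (((r+2).factorial : ℕ) : ℝ) / 2 by
    rw [← prod_den r]; ring]
  field_simp

/-- In the Polya urn starting from `3/2` white and `3/2` black balls, the probability that
exactly `k - 1` of the first `n - 2` added balls are white equals `p_n(k)`; equivalently
`C(n-2, k-1) ⬝ 2 (k-1/2)_{k-1} (n-k-1/2)_{n-k-1} / n! = p_n(k)`. -/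
theorem stmt6 (n k : ℕ) (hn : 2 ≤ n) (hk1 : 1 ≤ k) (hk : k ≤ n - 1) :
    (∑ ε ∈ Finset.univ.filter
        (fun ε : Fin (n - 2) → Bool =>
          (Finset.univ.filter (fun i => ε i = true)).card = k - 1),
      urnP ε) = pn n k ∧
    (((n - 2).choose (k - 1) : ℕ) : ℝ) *
        (2 * ffac ((k : ℝ) - 1/2) (k - 1) * ffac ((n : ℝ) - (k : ℝ) - 1/2) (n - k - 1) /
          (n.factorial : ℝ)) = pn n k := by
  obtain ⟨r, rfl⟩ : ∃ r, n = r + 2 := ⟨n - 2, by omega⟩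
  obtain ⟨w, rfl⟩ : ∃ w, k = w + 1 := ⟨k - 1, by omega⟩
  have hw : w ≤ r := by omega
  have e1 : r + 2 - (w + 1) - 1 = r - w := by omega
  have e3 : ((w + 1 : ℕ) : ℝ) - 1/2 = ((w : ℕ) : ℝ) + 1/2 := by push_cast; ring
  have e2 : ((r + 2 : ℕ) : ℝ) - ((w + 1 : ℕ) : ℝ) - 1/2 = ((r - w : ℕ) : ℝ) + 1/2 := by
    push_cast [hw]; ring
  have hpn : pn (r+2) (w+1) = (1 / (((r+2).choose 2 : ℕ) : ℝ)) * (g w * g (r - w)) /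
      ((w.factorial : ℝ) * ((r-w).factorial : ℝ)) := by
    rw [pn, Nat.add_sub_cancel, e1, e3, e2, ffac_eq_g, ffac_eq_g]
  constructor
  · simp only [Nat.add_sub_cancel]
    calc (∑ ε ∈ Finset.univ.filter
        (fun ε : Fin r → Bool =>
          (Finset.univ.filter (fun i => ε i = true)).card = w),
      urnP ε)
        = ∑ ε ∈ Finset.univ.filter
            (fun ε : Fin r → Bool =>
              (Finset.univ.filter (fun i => ε i = true)).card = w),
            (g w * g (r - w) * 2 / (((r+2).factorial : ℕ) : ℝ)) := by
          refine Finset.sum_congr rfl (fun ε hε => ?_)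
          rw [urnP_eq, (Finset.mem_filter.mp hε).2]
      _ = ((r.choose w : ℕ) : ℝ) * (2 * g w * g (r - w) / (((r+2).factorial : ℕ) : ℝ)) := by
          rw [Finset.sum_const, card_eps, nsmul_eq_mul]
          ring
      _ = pn (r+2) (w+1) := by rw [hpn, key r w hw]
  · simp only [Nat.add_sub_cancel]
    rw [e1, e3, e2, ffac_eq_g, ffac_eq_g, hpn]
    exact key r w hw
end

section
/- Let n, m, j be integers with m ≤ n and 1 ≤ j ≤ m-1. Then Σ_{k=1}^{n-1} p_n(k) · h^{n-2}_{m-2, k-1}(j-1) = p_m(j). In particular the left-hand side does not depend on n. -/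
open scoped Classical

/-- The hypergeometric mass function `h^n_{m,k}(i) = C(k,i) C(n-k,m-i) / C(n,m)`
(with the convention that `C(a,b) = 0` for `b > a`, as for `Nat.choose`). -/
noncomputable def hyper (n m k i : ℕ) : ℝ :=
  ((k.choose i : ℕ) : ℝ) * (((n - k).choose (m - i) : ℕ) : ℝ) / ((n.choose m : ℕ) : ℝ)

/-! ### Auxiliary lemmas -/

lemma choose_sub_one_mul (a b : ℕ) : a * (a - 1).choose b = (a - b) * a.choose b := by
  rcases Nat.lt_or_ge b a with h | h
  · obtain ⟨a', rfl⟩ : ∃ a', a = a' + 1 := ⟨a - 1, by omega⟩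
    have hb : b ≤ a' := by omega
    have h1 := Nat.add_one_mul_choose_eq a' (a' - b)
    rw [Nat.choose_symm hb] at h1
    rw [show a' - b + 1 = a' + 1 - b by omega, Nat.choose_symm (by omega : b ≤ a' + 1)] at h1
    rw [Nat.add_sub_cancel, h1]
    ring
  · have hab : a - b = 0 := by omega
    rw [hab, Nat.zero_mul]
    rcases Nat.eq_zero_or_pos a with rfl | ha
    · simp
    · rw [Nat.choose_eq_zero_of_lt (by omega), Nat.mul_zero]

lemma nat_key (N M K J : ℕ) (hJM : J ≤ M) (hKN : K ≤ N) (hMN : M ≤ N) :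
    (N - K) * ((N - 1 - K).choose (M - J)) * K.choose J
      + K * ((K - 1).choose J) * ((N - K).choose (M - J))
    = (N - M) * (K.choose J * (N - K).choose (M - J)) := by
  have e1 : N - 1 - K = N - K - 1 := by omega
  rw [e1]
  by_cases hK : J ≤ K
  · by_cases hN : M - J ≤ N - K
    · rw [choose_sub_one_mul (N - K) (M - J), choose_sub_one_mul K J]
      have e2 : (N - K - (M - J)) + (K - J) = N - M := by omega
      rw [← e2]; ring
    · rw [Nat.choose_eq_zero_of_lt (by omega : N - K < M - J),
        Nat.choose_eq_zero_of_lt (by omega : N - K - 1 < M - J)]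
      simp
  · rw [Nat.choose_eq_zero_of_lt (by omega : K < J),
      Nat.choose_eq_zero_of_lt (by omega : K - 1 < J)]
    simp

lemma hyper_rec (N M K J : ℕ) (hMN : M < N) (hJM : J ≤ M) (hKN : K ≤ N) :
    hyper N M K J
      = (((N : ℝ) - K) * hyper (N - 1) M K J + (K : ℝ) * hyper (N - 1) M (K - 1) J)
        / N := by
  have hN : 0 < N := lt_of_le_of_lt (Nat.zero_le M) hMN
  have hC : ((N.choose M : ℕ) : ℝ) ≠ 0 := by
    exact_mod_cast (Nat.choose_pos hMN.le).ne'
  have hC' : (((N - 1).choose M : ℕ) : ℝ) ≠ 0 := by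
    exact_mod_cast (Nat.choose_pos (by omega)).ne'
  have hNne : (N : ℝ) ≠ 0 := by exact_mod_cast hN.ne'
  rcases Nat.eq_zero_or_pos K with rfl | hKpos
  · simp only [Nat.zero_sub, Nat.cast_zero, sub_zero, Nat.sub_zero, zero_mul, add_zero]
    unfold hyper
    by_cases hJ : J = 0
    · subst hJ
      simp only [Nat.choose_zero_right, Nat.cast_one, one_mul, Nat.sub_zero]
      rw [div_self hC, div_self hC', mul_one, div_self hNne]
    · rw [Nat.choose_eq_zero_of_lt (by omega : 0 < J)]
      simp
  · have e1 : N - 1 - K = N - K - 1 := by omega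
    have e2 : N - 1 - (K - 1) = N - K := by omega
    unfold hyper
    rw [e1, e2]
    have hcNK : ((N : ℝ) - K) = ((N - K : ℕ) : ℝ) := by rw [Nat.cast_sub hKN]
    rw [hcNK]
    have key := nat_key N M K J hJM hKN hMN.le
    rw [e1] at key
    have keyR : ((N - K : ℕ) : ℝ) * ((N - K - 1).choose (M - J)) * K.choose J
        + (K : ℝ) * ((K - 1).choose J) * ((N - K).choose (M - J))
        = ((N - M : ℕ) : ℝ) * (K.choose J * (N - K).choose (M - J)) := by
      exact_mod_cast key
    have hA : ((N - M : ℕ) : ℝ) * (N.choose M : ℝ) = (N : ℝ) * ((N - 1).choose M : ℝ) := by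
      exact_mod_cast (choose_sub_one_mul N M).symm
    have expand : ((N - K : ℕ) : ℝ) * ((K.choose J : ℝ) * ((N - K - 1).choose (M - J) : ℝ) / ((N - 1).choose M : ℝ)) + (K : ℝ) * (((K - 1).choose J : ℝ) * ((N - K).choose (M - J) : ℝ) / ((N - 1).choose M : ℝ))
        = ((N - M : ℕ) : ℝ) * (K.choose J * (N - K).choose (M - J)) / ((N - 1).choose M : ℝ) := by
      rw [← keyR]; ring
    rw [expand, div_div]
    rw [div_eq_div_iff hC (by positivity)]
    linear_combination (-(K.choose J : ℝ) * ((N - K).choose (M - J) : ℝ)) * hA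

/-- `f(k) = (k-1/2)_{k-1} / (k-1)!`. -/
noncomputable def ffr (k : ℕ) : ℝ := ffac ((k : ℝ) - 1/2) (k - 1) / ((k - 1).factorial : ℝ)

lemma pn_eq (n k : ℕ) (hk : k ≤ n) :
    pn n k = ffr k * ffr (n - k) / ((n.choose 2 : ℕ) : ℝ) := by
  unfold pn ffr
  rw [Nat.cast_sub hk]
  field_simp

lemma ffr_rec (k : ℕ) (hk : 1 ≤ k) : (k : ℝ) * ffr (k + 1) = ((k : ℝ) + 1/2) * ffr k := by
  obtain ⟨k', rfl⟩ : ∃ k', k = k' + 1 := ⟨k - 1, by omega⟩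
  unfold ffr
  have e1 : k' + 1 + 1 - 1 = k' + 1 := by omega
  have e2 : k' + 1 - 1 = k' := by omega
  rw [e1, e2]
  rw [show ffac ((↑(k' + 1 + 1) : ℝ) - 1/2) (k' + 1)
      = ((↑(k' + 1 + 1) : ℝ) - 1/2) * ffac ((↑(k' + 1 + 1) : ℝ) - 1/2 - 1) k' from rfl]
  have e3 : ((↑(k' + 1 + 1) : ℝ) - 1/2 - 1) = ((↑(k' + 1) : ℕ) : ℝ) - 1/2 := by
    push_cast; ring
  rw [e3]
  rw [Nat.factorial_succ]
  have hf : ((k'.factorial : ℕ) : ℝ) ≠ 0 := by exact_mod_cast k'.factorial_ne_zero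
  push_cast
  field_simp
  ring

lemma two_mul_choose_two (n : ℕ) : 2 * n.choose 2 = n * (n - 1) := by
  rw [Nat.choose_two_right]
  rcases Nat.eq_zero_or_pos n with rfl | hn
  · simp
  · have he : Even (n * (n - 1)) := by
      have := Nat.even_mul_succ_self (n - 1)
      rwa [show n - 1 + 1 = n by omega, mul_comm] at this
    exact Nat.mul_div_cancel' he.two_dvd

lemma choose_two_cast (n : ℕ) (hn : 1 ≤ n) :
    ((n.choose 2 : ℕ) : ℝ) = (n : ℝ) * ((n : ℝ) - 1) / 2 := by
  have h := two_mul_choose_two n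
  have h2 : ((2 * n.choose 2 : ℕ) : ℝ) = ((n * (n - 1) : ℕ) : ℝ) := by rw [h]
  push_cast [Nat.cast_sub hn] at h2
  linarith

lemma pn_rec (n k : ℕ) (hn : 2 ≤ n) (hk1 : 1 ≤ k) (hk : k ≤ n - 1) :
    ((n : ℝ) - k) * pn (n + 1) k + (k : ℝ) * pn (n + 1) (k + 1) = ((n : ℝ) - 1) * pn n k := by
  rw [pn_eq (n + 1) k (by omega), pn_eq (n + 1) (k + 1) (by omega), pn_eq n k (by omega)]
  have e1 : n + 1 - k = (n - k) + 1 := by omega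
  have e2 : n + 1 - (k + 1) = n - k := by omega
  rw [e1, e2]
  have h1 := ffr_rec (n - k) (by omega)
  have h2 := ffr_rec k hk1
  have hnk : ((n - k : ℕ) : ℝ) = (n : ℝ) - (k : ℝ) := by rw [Nat.cast_sub (by omega)]
  rw [hnk] at h1
  have c1 := choose_two_cast n (by omega)
  have c2 := choose_two_cast (n + 1) (by omega)
  rw [c1, c2]
  push_cast at c2 ⊢
  have hn0 : (n : ℝ) ≠ 0 := by positivity
  have hn1 : (n : ℝ) - 1 ≠ 0 := by
    have : (2 : ℝ) ≤ (n : ℝ) := by exact_mod_cast hn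
    linarith
  have hn2 : (n : ℝ) + 1 ≠ 0 := by positivity
  field_simp
  rw [add_sub_cancel_right, mul_div_cancel_left₀ _ hn0]
  linear_combination ffr k * h1 + ffr (n-k) * h2

/-- `Σ_{k=1}^{n-1} p_n(k) h^{n-2}_{m-2,k-1}(j-1) = p_m(j)`; in particular the left-hand
side does not depend on `n`. -/
theorem stmt7 (n m j : ℕ) (hmn : m ≤ n) (hj1 : 1 ≤ j) (hj : j ≤ m - 1) :
    ∑ k ∈ Finset.Icc 1 (n - 1), pn n k * hyper (n - 2) (m - 2) (k - 1) (j - 1) =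
      pn m j := by
  have hm2 : 2 ≤ m := by omega
  induction n, hmn using Nat.le_induction with
  | base =>
    rw [Finset.sum_eq_single_of_mem j (by simp only [Finset.mem_Icc]; omega)]
    · unfold hyper
      rw [Nat.choose_self, Nat.choose_self, Nat.choose_self]
      norm_num
    · intro k hk hkj
      simp only [Finset.mem_Icc] at hk
      unfold hyper
      rcases Nat.lt_or_ge k j with h | h
      · rw [Nat.choose_eq_zero_of_lt (by omega : k - 1 < j - 1)]
        simp
      · rw [Nat.choose_eq_zero_of_lt (by omega : m - 2 - (k - 1) < m - 2 - (j - 1))]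
        simp
  | succ n hn ih =>
    have hn2 : 2 ≤ n := by omega
    have en1 : n + 1 - 1 = n := by omega
    have en2 : n + 1 - 2 = n - 1 := by omega
    rw [en1, en2]
    have key : ∀ k ∈ Finset.Icc 1 n,
        pn (n + 1) k * hyper (n - 1) (m - 2) (k - 1) (j - 1)
        = (pn (n + 1) k * ((((n - 1 : ℕ) : ℝ)) - ((k - 1 : ℕ) : ℝ))
              * hyper (n - 2) (m - 2) (k - 1) (j - 1)
           + pn (n + 1) k * ((k - 1 : ℕ) : ℝ) * hyper (n - 2) (m - 2) (k - 2) (j - 1))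
          / ((n - 1 : ℕ) : ℝ) := by
      intro k hk
      simp only [Finset.mem_Icc] at hk
      have hr := hyper_rec (n - 1) (m - 2) (k - 1) (j - 1)
        (by omega) (by omega) (by omega)
      have e3 : n - 1 - 1 = n - 2 := by omega
      have e4 : k - 1 - 1 = k - 2 := by omega
      rw [e3, e4] at hr
      rw [hr]
      ring
    rw [Finset.sum_congr rfl key]
    rw [← Finset.sum_div, Finset.sum_add_distrib]
    -- S1: drop the top term (k = n), whose coefficient vanishes
    have hsplit1 : Finset.Icc 1 n = insert n (Finset.Icc 1 (n - 1)) := by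
      ext x; simp only [Finset.mem_insert, Finset.mem_Icc]; omega
    have S1 : ∑ k ∈ Finset.Icc 1 n,
          pn (n + 1) k * (((n - 1 : ℕ) : ℝ) - ((k - 1 : ℕ) : ℝ))
            * hyper (n - 2) (m - 2) (k - 1) (j - 1)
        = ∑ k ∈ Finset.Icc 1 (n - 1),
          pn (n + 1) k * (((n - 1 : ℕ) : ℝ) - ((k - 1 : ℕ) : ℝ))
            * hyper (n - 2) (m - 2) (k - 1) (j - 1) := by
      rw [hsplit1, Finset.sum_insert (by simp only [Finset.mem_Icc]; omega)]
      simp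
    -- S2: shift index
    have hmap : Finset.map (addRightEmbedding 1) (Finset.Icc 0 (n - 1)) = Finset.Icc 1 n := by
      rw [Finset.map_add_right_Icc]
      congr 1 <;> omega
    have S2 : ∑ k ∈ Finset.Icc 1 n,
          pn (n + 1) k * ((k - 1 : ℕ) : ℝ) * hyper (n - 2) (m - 2) (k - 2) (j - 1)
        = ∑ k ∈ Finset.Icc 1 (n - 1),
          pn (n + 1) (k + 1) * (k : ℝ) * hyper (n - 2) (m - 2) (k - 1) (j - 1) := by
      rw [← hmap, Finset.sum_map]
      have hsplit0 : Finset.Icc 0 (n - 1) = insert 0 (Finset.Icc 1 (n - 1)) := by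
        ext x; simp only [Finset.mem_insert, Finset.mem_Icc]; omega
      rw [hsplit0, Finset.sum_insert (by simp only [Finset.mem_Icc]; omega)]
      simp only [addRightEmbedding_apply]
      rw [show (0 : ℕ) + 1 = 1 from rfl]
      simp only [Nat.sub_self, Nat.cast_zero, mul_zero, zero_mul, zero_add]
      apply Finset.sum_congr rfl
      intro k hk
      simp only [Finset.mem_Icc] at hk
      have e5 : k + 1 - 1 = k := by omega
      have e6 : k + 1 - 2 = k - 1 := by omega
      rw [e5, e6]
    rw [S1, S2, ← Finset.sum_add_distrib, Finset.sum_div]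
    rw [← ih]
    apply Finset.sum_congr rfl
    intro k hk
    simp only [Finset.mem_Icc] at hk
    have hrec := pn_rec n k hn2 hk.1 hk.2
    have hc1 : ((n - 1 : ℕ) : ℝ) = (n : ℝ) - 1 := by
      rw [Nat.cast_sub (by omega), Nat.cast_one]
    have hck : ((k - 1 : ℕ) : ℝ) = (k : ℝ) - 1 := by
      rw [Nat.cast_sub hk.1, Nat.cast_one]
    rw [hc1, hck]
    have hn1 : (n : ℝ) - 1 ≠ 0 := by
      have : (2 : ℝ) ≤ (n : ℝ) := by exact_mod_cast hn2
      linarith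
    rw [div_eq_iff hn1]
    have : pn (n + 1) k * ((n : ℝ) - 1 - ((k : ℝ) - 1)) * hyper (n - 2) (m - 2) (k - 1) (j - 1)
        + pn (n + 1) (k + 1) * (k : ℝ) * hyper (n - 2) (m - 2) (k - 1) (j - 1)
        = (((n : ℝ) - k) * pn (n + 1) k + (k : ℝ) * pn (n + 1) (k + 1))
            * hyper (n - 2) (m - 2) (k - 1) (j - 1) := by ring
    rw [this, hrec]
    ring
end

section
/- Let m ≥ 2 and 1 ≤ j ≤ m-1 be integers. Then C(m,2) · C(m-2, j-1) · ∫_{-1}^{1} ((1+r)/2)^{j-1} ((1-r)/2)^{m-j-1} · (2/π)·√(1-r²) dr = ((j-1/2)_{j-1} · (m-j-1/2)_{m-j-1}) / ((j-1)!(m-j-1)!). -/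
open Real MeasureTheory in
lemma real_beta {u v : ℝ} (hu : 0 < u) (hv : 0 < v) :
    (∫ x in (0:ℝ)..1, x ^ (u-1) * (1-x) ^ (v-1)) =
      Real.Gamma u * Real.Gamma v / Real.Gamma (u+v) := by
  have h := Complex.Gamma_mul_Gamma_eq_betaIntegral
    (s := (u:ℂ)) (t := (v:ℂ)) (by simpa using hu) (by simpa using hv)
  have hβ : Complex.betaIntegral u v =
      ((∫ x in (0:ℝ)..1, x ^ (u-1) * (1-x) ^ (v-1) : ℝ) : ℂ) := by
    rw [Complex.betaIntegral, ← intervalIntegral.integral_ofReal]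
    refine intervalIntegral.integral_congr fun x hx => ?_
    rw [Set.uIcc_of_le (by norm_num : (0:ℝ) ≤ 1)] at hx
    rw [show ((u:ℂ)-1) = ((u-1:ℝ):ℂ) by push_cast; ring,
      show ((v:ℂ)-1) = ((v-1:ℝ):ℂ) by push_cast; ring,
      show (1-(x:ℂ)) = ((1-x:ℝ):ℂ) by push_cast; ring,
      ← Complex.ofReal_cpow hx.1, ← Complex.ofReal_cpow (by linarith [hx.2]),
      ← Complex.ofReal_mul]
  rw [hβ, ← Complex.ofReal_add, Complex.Gamma_ofReal, Complex.Gamma_ofReal,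
    Complex.Gamma_ofReal, ← Complex.ofReal_mul, ← Complex.ofReal_mul] at h
  have h' := Complex.ofReal_injective h
  have hne : Real.Gamma (u+v) ≠ 0 := (Real.Gamma_pos_of_pos (by linarith)).ne'
  field_simp
  linarith [h']

lemma ffac_eq (n : ℕ) :
    ffac ((n:ℝ) + 1/2) n = Real.Gamma ((n:ℝ) + 3/2) / Real.Gamma (3/2) := by
  induction n with
  | zero => simp [ffac, div_self (Real.Gamma_pos_of_pos (by norm_num : (0:ℝ) < 3/2)).ne']
  | succ n ih =>
    have h1 : ((n+1:ℕ):ℝ) + 1/2 - 1 = (n:ℝ) + 1/2 := by push_cast; ring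
    have h2 : ((n+1:ℕ):ℝ) + 3/2 = ((n:ℝ) + 3/2) + 1 := by push_cast; ring
    rw [show (ffac (((n+1:ℕ):ℝ) + 1/2) (n+1)) = (((n+1:ℕ):ℝ) + 1/2) *
        ffac (((n+1:ℕ):ℝ) + 1/2 - 1) n from rfl, h1, ih, h2,
      Real.Gamma_add_one (by positivity)]
    push_cast
    ring

open Real MeasureTheory in
lemma integral_eq (a b : ℕ) :
    (∫ r in (-1:ℝ)..1, ((1+r)/2)^a * ((1-r)/2)^b * ((2/Real.pi) * Real.sqrt (1 - r^2)))
    = (8/Real.pi) * (Real.Gamma ((a:ℝ)+3/2) * Real.Gamma ((b:ℝ)+3/2)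
        / Real.Gamma ((a:ℝ)+(b:ℝ)+3)) := by
  set f : ℝ → ℝ := fun r => ((1+r)/2)^a * ((1-r)/2)^b * ((2/Real.pi) * Real.sqrt (1 - r^2))
    with hf
  have h1 : (∫ r in (-1:ℝ)..1, f r) = 2 * ∫ t in (0:ℝ)..1, f (2*t-1) := by
    rw [intervalIntegral.integral_comp_mul_sub f two_ne_zero 1]
    norm_num [smul_eq_mul]
    ring
  have h2 : (∫ t in (0:ℝ)..1, f (2*t-1)) =
      ∫ t in (0:ℝ)..1, (4/Real.pi) * (t ^ ((a:ℝ)+3/2-1) * (1-t) ^ ((b:ℝ)+3/2-1)) := by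
    refine intervalIntegral.integral_congr fun t ht => ?_
    rw [Set.uIcc_of_le (by norm_num : (0:ℝ) ≤ 1)] at ht
    obtain ⟨ht0, ht1⟩ := ht
    have e3 : Real.sqrt (1-(2*t-1)^2) = 2 * Real.sqrt t * Real.sqrt (1-t) := by
      rw [show 1-(2*t-1)^2 = (2*Real.sqrt t*Real.sqrt (1-t))^2 by
        rw [mul_pow, mul_pow, Real.sq_sqrt ht0, Real.sq_sqrt (by linarith)]; ring]
      exact Real.sqrt_sq (by positivity)
    have e4 : (t:ℝ)^a * Real.sqrt t = t ^ ((a:ℝ)+3/2-1) := by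
      rw [show (a:ℝ)+3/2-1 = (a:ℝ)+1/2 by ring, Real.sqrt_eq_rpow,
        ← Real.rpow_natCast t a, ← Real.rpow_add' ht0 (by positivity)]
    have e5 : (1-t)^b * Real.sqrt (1-t) = (1-t) ^ ((b:ℝ)+3/2-1) := by
      rw [show (b:ℝ)+3/2-1 = (b:ℝ)+1/2 by ring, Real.sqrt_eq_rpow,
        ← Real.rpow_natCast (1-t) b, ← Real.rpow_add' (by linarith) (by positivity)]
    simp only [hf]
    rw [show (1+(2*t-1))/2 = t by ring, show (1-(2*t-1))/2 = 1-t by ring, e3, ← e4, ← e5]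
    ring
  rw [h1, h2, intervalIntegral.integral_const_mul,
    real_beta (by positivity) (by positivity),
    show (a:ℝ)+3/2 + ((b:ℝ)+3/2) = (a:ℝ)+(b:ℝ)+3 by ring]
  ring

/-- The geometric computation of the expected number of swaps at location `j` in the
random geometric `m`-particle sorting network:
`C(m,2) C(m-2,j-1) ∫_{-1}^{1} ((1+r)/2)^{j-1} ((1-r)/2)^{m-j-1} (2/π)√(1-r²) dr`
equals `(j-1/2)_{j-1} (m-j-1/2)_{m-j-1} / ((j-1)! (m-j-1)!)`. -/
theorem stmt8 (m j : ℕ) (hm : 2 ≤ m) (hj1 : 1 ≤ j) (hj : j ≤ m - 1) :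
    ((m.choose 2 : ℕ) : ℝ) * (((m - 2).choose (j - 1) : ℕ) : ℝ) *
        (∫ r in (-1 : ℝ)..1,
          ((1 + r) / 2) ^ (j - 1) * ((1 - r) / 2) ^ (m - j - 1) *
            ((2 / Real.pi) * Real.sqrt (1 - r ^ 2))) =
      ffac ((j : ℝ) - 1/2) (j - 1) * ffac ((m : ℝ) - (j : ℝ) - 1/2) (m - j - 1) /
        (((j - 1).factorial : ℝ) * ((m - j - 1).factorial : ℝ)) := by
  obtain ⟨a, rfl⟩ : ∃ a, j = a + 1 := ⟨j - 1, by omega⟩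
  obtain ⟨b, rfl⟩ : ∃ b, m = a + b + 2 := ⟨m - a - 2, by omega⟩
  have e1 : a + 1 - 1 = a := by omega
  have e2 : a + b + 2 - (a + 1) - 1 = b := by omega
  have e3 : a + b + 2 - 2 = a + b := by omega
  have e4 : ((a+1:ℕ):ℝ) - 1/2 = (a:ℝ) + 1/2 := by push_cast; ring
  have e5 : ((a+b+2:ℕ):ℝ) - ((a+1:ℕ):ℝ) - 1/2 = (b:ℝ) + 1/2 := by push_cast; ring
  rw [e1, e2, e3, e4, e5, integral_eq a b, ffac_eq a, ffac_eq b,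
    Nat.cast_choose ℝ (show 2 ≤ a+b+2 by omega),
    Nat.cast_choose ℝ (show a ≤ a+b by omega), e3,
    show a + b - a = b from by omega,
    show Real.Gamma ((a:ℝ)+(b:ℝ)+3) = ((a+b+2).factorial : ℝ) from by
      rw [show (a:ℝ)+(b:ℝ)+3 = ((a+b+2:ℕ):ℝ)+1 by push_cast; ring,
        Real.Gamma_nat_eq_factorial],
    show Real.Gamma (3/2) = Real.sqrt Real.pi / 2 from by
      rw [show (3/2:ℝ) = 1/2 + 1 by norm_num, Real.Gamma_add_one (by norm_num),
        Real.Gamma_one_half_eq]; ring]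
  have hπ : Real.pi = Real.sqrt Real.pi * Real.sqrt Real.pi :=
    (Real.mul_self_sqrt Real.pi_pos.le).symm
  have hs : Real.sqrt Real.pi ≠ 0 := by positivity
  rw [hπ]
  have f1 : ((a+b+2).factorial : ℝ) ≠ 0 := Nat.cast_ne_zero.2 (Nat.factorial_ne_zero _)
  have f2 : ((a+b).factorial : ℝ) ≠ 0 := Nat.cast_ne_zero.2 (Nat.factorial_ne_zero _)
  have f3 : ((a).factorial : ℝ) ≠ 0 := Nat.cast_ne_zero.2 (Nat.factorial_ne_zero _)
  have f4 : ((b).factorial : ℝ) ≠ 0 := Nat.cast_ne_zero.2 (Nat.factorial_ne_zero _)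
  have f5 : ((a+b+2).factorial : ℝ) = ((a+b+2:ℕ):ℝ) * ((a+b+1:ℕ):ℝ) * ((a+b).factorial : ℝ) := by
    rw [show a+b+2 = (a+b+1)+1 by ring, Nat.factorial_succ, Nat.factorial_succ]
    push_cast; ring
  field_simp
  rw [Real.sqrt_sq (Real.sqrt_nonneg _), Nat.factorial_two]
  push_cast
  ring
end

section
/- Let 2 ≤ m ≤ n, 1 ≤ k ≤ n-1, 1 ≤ j ≤ m-1, and let N = n(n-1)/2. For t ∈ {1,…,N} let Q_t(k,j) denote the number of pairs (ω, A), with ω an n-particle sorting network and A an m-element subset of {1,…,n}, such that s_t(ω) = k and time t is an A-swap of ω at sublocation j. Then Q_t(k,j) = Q_1(k,j) for every t ∈ {1,…,N}; that is, Q_t(k,j) does not depend on t. -/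
open scoped Classical

/-- Time `t+1` (for `t : Fin N`) is an `A`-swap of `ω` at sublocation `j`: both particles
exchanged at time `t+1` lie in `A`, and exactly `j - 1` locations to the left of the swap
location hold particles of `A`. -/
def isASwap (n : ℕ) (ω : Fin (n * (n - 1) / 2) → Fin (n - 1)) (A : Finset ℕ) (j : ℕ)
    (t : Fin (n * (n - 1) / 2)) : Prop :=
  config n ω t.val ((ω t : ℕ) + 1) ∈ A ∧ config n ω t.val ((ω t : ℕ) + 2) ∈ A ∧
    ((Finset.Icc 1 n).filter (fun l => l < (ω t : ℕ) + 1 ∧ config n ω t.val l ∈ A)).card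
      = j - 1

/-- `Q n m k j t` is the number of pairs `(ω, A)`, with `ω` an `n`-particle sorting
network and `A` an `m`-element subset of `{1, …, n}`, such that the swap of `ω` at time
`t+1` is in location `k` and time `t+1` is an `A`-swap of `ω` at sublocation `j`. -/
noncomputable def Q (n m k j : ℕ) (t : Fin (n * (n - 1) / 2)) : ℕ :=
  ((SN n ×ˢ Finset.powersetCard m (Finset.Icc 1 n)).filter
    (fun p => (p.1 t : ℕ) + 1 = k ∧ isASwap n p.1 p.2 j t)).card

lemma Npos {n : ℕ} (hn : 2 ≤ n) : 0 < n * (n - 1) / 2 := by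
  have h : 2 * 1 ≤ n * (n - 1) := Nat.mul_le_mul hn (by omega)
  omega

lemma Npos' {n : ℕ} (hn : 2 ≤ n) : 0 < n * (n - 1) / 2 := by
  have h : 2 * 1 ≤ n * (n - 1) := Nat.mul_le_mul hn (by omega)
  omega

lemma config_succ (n : ℕ) {N : ℕ} (ω : Fin N → Fin (n-1)) (u : ℕ) (h : u < N) :
    config n ω (u+1) = config n ω u *
      Equiv.swap ((ω ⟨u,h⟩ : ℕ)+1) ((ω ⟨u,h⟩ : ℕ)+2) := by
  unfold config swapList
  rw [List.prod_take_succ _ u (by simpa using h)]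
  congr 1
  simp [List.get_ofFn]

noncomputable def shiftW (n : ℕ) (hn : 2 ≤ n) (ω : Fin (n*(n-1)/2) → Fin (n-1)) :
    Fin (n*(n-1)/2) → Fin (n-1) :=
  fun u => if h : u.val + 1 < n*(n-1)/2 then ω ⟨u.val+1, h⟩
    else ⟨n - 2 - (ω ⟨0, Npos' hn⟩ : ℕ), by omega⟩

lemma config_shift (n : ℕ) (hn : 2 ≤ n) (ω : Fin (n*(n-1)/2) → Fin (n-1)) (u : ℕ)
    (hu : u + 1 ≤ n*(n-1)/2) :
    config n (shiftW n hn ω) u =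
      Equiv.swap ((ω ⟨0,Npos' hn⟩ : ℕ)+1) ((ω ⟨0,Npos' hn⟩ : ℕ)+2) * config n ω (u+1) := by
  induction u with
  | zero =>
      rw [config_succ n ω 0 (by omega)]
      have h0 : config n ω 0 = 1 := by simp [config]
      have h0' : config n (shiftW n hn ω) 0 = 1 := by simp [config]
      rw [h0, h0', one_mul]
      simp
  | succ v ih =>
      rw [config_succ n (shiftW n hn ω) v (by omega), ih (by omega),
        config_succ n ω (v+1) (by omega)]
      have hv : shiftW n hn ω ⟨v, by omega⟩ = ω ⟨v+1, by omega⟩ := by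
        simp [shiftW, dif_pos (show v + 1 < n*(n-1)/2 by omega)]
      rw [hv, mul_assoc]

lemma shiftW_mem_SN (n : ℕ) (hn : 2 ≤ n) (ω : Fin (n*(n-1)/2) → Fin (n-1))
    (hω : ω ∈ SN n) : shiftW n hn ω ∈ SN n := by
  simp only [SN, Finset.mem_filter, Finset.mem_univ, true_and] at hω ⊢
  intro i hi
  have hN1 : 1 ≤ n*(n-1)/2 := Npos' hn
  set e := (ω ⟨0, Npos' hn⟩ : ℕ) with he
  have hee : e < n - 1 := (ω ⟨0, Npos' hn⟩).isLt
  have hlast : (shiftW n hn ω ⟨n*(n-1)/2 - 1, by omega⟩ : ℕ) = n - 2 - e := by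
    simp [shiftW, dif_neg (show ¬ (n*(n-1)/2 - 1 + 1 < n*(n-1)/2) by omega), he]
  have h1 : config n (shiftW n hn ω) (n*(n-1)/2)
      = config n (shiftW n hn ω) (n*(n-1)/2 - 1) *
        Equiv.swap (n-2-e+1) (n-2-e+2) := by
    have h := config_succ n (shiftW n hn ω) (n*(n-1)/2 - 1) (by omega)
    rw [hlast] at h
    rwa [show n*(n-1)/2 - 1 + 1 = n*(n-1)/2 by omega] at h
  have h2 := config_shift n hn ω (n*(n-1)/2 - 1) (by omega)
  rw [show n*(n-1)/2 - 1 + 1 = n*(n-1)/2 by omega] at h2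
  rw [h1, h2, ← he]
  simp only [Finset.mem_Icc] at hi
  rw [Equiv.Perm.mul_apply, Equiv.Perm.mul_apply]
  by_cases hia : i = n-2-e+1
  · rw [hia, Equiv.swap_apply_left, hω (n-2-e+2) (by simp; omega),
      show n+1-(n-2-e+2) = e+1 by omega, Equiv.swap_apply_left]
    omega
  · by_cases hib : i = n-2-e+2
    · rw [hib, Equiv.swap_apply_right, hω (n-2-e+1) (by simp; omega),
        show n+1-(n-2-e+1) = e+2 by omega, Equiv.swap_apply_right]
      omega
    · rw [Equiv.swap_apply_of_ne_of_ne hia hib, hω i (by simp; omega),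
        Equiv.swap_apply_of_ne_of_ne (by omega) (by omega)]

lemma shiftW_inj (n : ℕ) (hn : 2 ≤ n) : Function.Injective (shiftW n hn) := by
  intro ω₁ ω₂ h
  funext u
  rcases u with ⟨v, hv⟩
  rcases Nat.eq_zero_or_pos v with h0 | hpos
  · subst h0
    have h1 := congrFun h ⟨n*(n-1)/2 - 1, by have := Npos' hn; omega⟩
    simp only [shiftW,
      dif_neg (show ¬ (n*(n-1)/2 - 1 + 1 < n*(n-1)/2) by have := Npos' hn; omega)] at h1
    have h2 := (ω₁ ⟨0, Npos' hn⟩).isLt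
    have h3 := (ω₂ ⟨0, Npos' hn⟩).isLt
    rw [Fin.mk.injEq] at h1
    have : (ω₁ ⟨0, Npos' hn⟩ : ℕ) = (ω₂ ⟨0, Npos' hn⟩ : ℕ) := by omega
    exact Fin.ext this
  · have h1 := congrFun h ⟨v - 1, by omega⟩
    simp only [shiftW, dif_pos (show v - 1 + 1 < n*(n-1)/2 by omega)] at h1
    have h2 : (⟨v - 1 + 1, by omega⟩ : Fin (n*(n-1)/2)) = ⟨v, hv⟩ := by
      ext; simp; omega
    rwa [h2] at h1

lemma shiftW_surjOn (n : ℕ) (hn : 2 ≤ n) (ω' : Fin (n*(n-1)/2) → Fin (n-1))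
    (hω' : ω' ∈ SN n) : ∃ ω ∈ SN n, shiftW n hn ω = ω' := by
  have himg : (SN n).image (shiftW n hn) = SN n := by
    apply Finset.eq_of_subset_of_card_le
    · intro x hx
      rcases Finset.mem_image.mp hx with ⟨ω, hω, rfl⟩
      exact shiftW_mem_SN n hn ω hω
    · exact le_of_eq (Finset.card_image_of_injective _ (shiftW_inj n hn)).symm
  rw [← himg] at hω'
  rcases Finset.mem_image.mp hω' with ⟨ω, hω, hωe⟩
  exact ⟨ω, hω, hωe⟩

lemma mem_image_swap (τ : Equiv.Perm ℕ) (A : Finset ℕ) (x : ℕ) :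
    τ x ∈ A.image τ ↔ x ∈ A := by
  simp [Finset.mem_image]

lemma image_swap_mem (n : ℕ) (e : ℕ) (he : e < n - 1) (A : Finset ℕ) (m : ℕ)
    (hA : A ∈ Finset.powersetCard m (Finset.Icc 1 n)) :
    A.image (Equiv.swap (e+1) (e+2)) ∈ Finset.powersetCard m (Finset.Icc 1 n) := by
  rw [Finset.mem_powersetCard] at hA ⊢
  refine ⟨?_, by rw [Finset.card_image_of_injective _ (Equiv.injective _)]; exact hA.2⟩
  intro x hx
  rcases Finset.mem_image.mp hx with ⟨a, ha, rfl⟩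
  have := Finset.mem_Icc.mp (hA.1 ha)
  rw [Equiv.swap_apply_def]
  split_ifs <;> (simp only [Finset.mem_Icc]; omega)

lemma image_swap_image_swap (τ : Equiv.Perm ℕ) (hτ : ∀ x, τ (τ x) = x) (A : Finset ℕ) :
    (A.image τ).image τ = A := by
  rw [Finset.image_image]
  have : (⇑τ ∘ ⇑τ) = id := funext hτ
  rw [this, Finset.image_id]

lemma isASwap_shift (n : ℕ) (hn : 2 ≤ n) (ω : Fin (n*(n-1)/2) → Fin (n-1)) (A : Finset ℕ)
    (j u : ℕ) (hu : u + 1 < n*(n-1)/2) :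
    isASwap n (shiftW n hn ω)
      (A.image (Equiv.swap ((ω ⟨0, Npos' hn⟩ : ℕ)+1) ((ω ⟨0, Npos' hn⟩ : ℕ)+2))) j
      ⟨u, by omega⟩ ↔ isASwap n ω A j ⟨u+1, hu⟩ := by
  have hsv : shiftW n hn ω ⟨u, by omega⟩ = ω ⟨u+1, hu⟩ := by
    simp [shiftW, dif_pos hu]
  have hc : config n (shiftW n hn ω) u =
      Equiv.swap ((ω ⟨0, Npos' hn⟩ : ℕ)+1) ((ω ⟨0, Npos' hn⟩ : ℕ)+2) * config n ω (u+1) :=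
    config_shift n hn ω u (by omega)
  simp only [isASwap, hsv, hc, Equiv.Perm.mul_apply, mem_image_swap]

lemma Q_succ (n m k j : ℕ) (hn : 2 ≤ n) (u : ℕ) (hu : u + 1 < n*(n-1)/2) :
    Q n m k j ⟨u+1, hu⟩ = Q n m k j ⟨u, by omega⟩ := by
  unfold Q
  apply Finset.card_bij
    (fun p _ => (shiftW n hn p.1,
      p.2.image (Equiv.swap ((p.1 ⟨0, Npos' hn⟩ : ℕ)+1) ((p.1 ⟨0, Npos' hn⟩ : ℕ)+2))))
  · intro p hp
    rw [Finset.mem_filter, Finset.mem_product] at hp ⊢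
    obtain ⟨⟨hSN, hA⟩, hk, hsw⟩ := hp
    have hsv : shiftW n hn p.1 ⟨u, by omega⟩ = p.1 ⟨u+1, hu⟩ := by
      simp [shiftW, dif_pos hu]
    refine ⟨⟨shiftW_mem_SN n hn _ hSN,
      image_swap_mem n _ (p.1 ⟨0, Npos' hn⟩).isLt _ m hA⟩, ?_, ?_⟩
    · show (shiftW n hn p.1 ⟨u, by omega⟩ : ℕ) + 1 = k
      rw [hsv]; exact hk
    · exact (isASwap_shift n hn p.1 p.2 j u hu).mpr hsw
  · intro p₁ h₁ p₂ h₂ heq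
    rw [Prod.mk.injEq] at heq
    have hω : p₁.1 = p₂.1 := shiftW_inj n hn heq.1
    have hA : p₁.2 = p₂.2 := by
      have := heq.2
      rw [hω] at this
      exact Finset.image_injective (Equiv.injective _) this
    exact Prod.ext hω hA
  · intro p hp
    rw [Finset.mem_filter, Finset.mem_product] at hp
    obtain ⟨⟨hSN, hA⟩, hk, hsw⟩ := hp
    obtain ⟨ω, hωSN, hωe⟩ := shiftW_surjOn n hn p.1 hSN
    set τ := Equiv.swap ((ω ⟨0, Npos' hn⟩ : ℕ)+1) ((ω ⟨0, Npos' hn⟩ : ℕ)+2) with hτ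
    have hττ : ∀ x, τ (τ x) = x := fun x => Equiv.swap_apply_self _ _ _
    refine ⟨(ω, p.2.image τ), ?_, ?_⟩
    · rw [Finset.mem_filter, Finset.mem_product]
      have hsv : shiftW n hn ω ⟨u, by omega⟩ = ω ⟨u+1, hu⟩ := by
        simp [shiftW, dif_pos hu]
      refine ⟨⟨hωSN, image_swap_mem n _ (ω ⟨0, Npos' hn⟩).isLt _ m hA⟩, ?_, ?_⟩
      · show (ω ⟨u+1, hu⟩ : ℕ) + 1 = k
        rw [← hsv, hωe]; exact hk
      · apply (isASwap_shift n hn ω (p.2.image τ) j u hu).mp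
        rw [← hτ, image_swap_image_swap τ hττ, hωe]
        exact hsw
    · rw [← hτ, image_swap_image_swap τ hττ, hωe]

/-- The count `Q_t(k,j)` does not depend on `t`. -/
theorem stmt9 (n m k j : ℕ) (hm : 2 ≤ m) (hmn : m ≤ n) (hk1 : 1 ≤ k) (hk : k ≤ n - 1)
    (hj1 : 1 ≤ j) (hj : j ≤ m - 1) (t : Fin (n * (n - 1) / 2)) :
    Q n m k j t = Q n m k j ⟨0, Npos (hm.trans hmn)⟩ := by
  have hn : 2 ≤ n := hm.trans hmn
  obtain ⟨v, hv⟩ := t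
  induction v with
  | zero => rfl
  | succ w ih =>
      rw [Q_succ n m k j hn w hv]
      exact ih (by omega)
end
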